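/- (Raising operator action on little $q$-Jacobi functions.) Let $0<q<1$, $a,b \in \mathbb{C}\setminus\{0\}$ with $|ab|<1$ and $|abq|<1$, $\sigma \neq 0$, $\lambda = \frac{1}{2}(\sigma+\sigma^{-1})$. Define the operator $A(a,b)$ by $(A(a,b)f)(x) = (1 + bx/(qa)) f(x) - ab(1+x) f(qx)$. Then for $x$ in the common domain of convergence: $(A(a,b)\, \phi_\lambda(\cdot; aq, b; q))(x) = (1 - ab)\, \phi_\lambda(x; a, b; q)$, where $\phi_\lambda(x;a,b;q) = {}_2\varphi_1\!\left({a\sigma, a/\sigma \atop ab}; q, -bx/a\right)$. -/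

import Mathlib

/-- Finite q-shifted factorial `(c;q)_j`. -/
noncomputable def qP (q : ℝ) (c : ℂ) (j : ℕ) : ℂ :=
  ∏ i ∈ Finset.range j, (1 - c * (q : ℂ) ^ i)

/-- The little q-Jacobi function `φ_λ(x;a,b;q) = ₂φ₁(aσ, a/σ; ab; q, -bx/a)`. -/
noncomputable def littleqJacobi (q : ℝ) (a b σ x : ℂ) : ℂ :=
  ∑' j : ℕ, (qP q (a * σ) j * qP q (a / σ) j) /
      (qP q (q : ℂ) j * qP q (a * b) j) * (-(b * x / a)) ^ j

/-!
Writing `α = aσ`, `β = a/σ`, `γ = ab` and `w = -bx/(aq)`, the three functions are the basic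
hypergeometric series `₂φ₁(αq, βq; γq; q, w)`, `₂φ₁(αq, βq; γq; q, qw)` and `₂φ₁(α, β; γ; q, qw)`,
and the claim becomes a contiguous relation in which only `αβ = a²` remembers `σ`.
Multiplied out termwise, the left-hand side minus the right-hand side is a telescoping series
`∑ (fⱼ - fⱼ₊₁)` with `f₀ = 0`, because the coefficients `dⱼ` of `₂φ₁(αq, βq; γq)` and `cⱼ` of
`₂φ₁(α, β; γ)` satisfy `dⱼ₊₁ (1 - γqʲ⁺¹) - (1 - γ) qʲ⁺¹ cⱼ₊₁ = dⱼ (1 - αβqʲ⁺¹)`, a rational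
identity in `qʲ⁺¹` once both sides are expressed through `dⱼ`.
-/

open Filter Topology

noncomputable def phi21Coeff (q : ℝ) (α β γ : ℂ) (j : ℕ) : ℂ :=
  qP q α j * qP q β j / (qP q (q : ℂ) j * qP q γ j)

noncomputable def phi21 (q : ℝ) (α β γ z : ℂ) : ℂ :=
  ∑' j : ℕ, phi21Coeff q α β γ j * z ^ j

lemma littleqJacobi_eq_phi21 (q : ℝ) (a b σ x : ℂ) :
    littleqJacobi q a b σ x = phi21 q (a * σ) (a / σ) (a * b) (-(b * x / a)) := rfl

section qPochhammer

variable {q : ℝ}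

lemma qP_zero (c : ℂ) : qP q c 0 = 1 := Finset.prod_range_zero _

lemma qP_succ (c : ℂ) (j : ℕ) : qP q c (j + 1) = qP q c j * (1 - c * (q : ℂ) ^ j) :=
  Finset.prod_range_succ _ _

lemma qP_succ' (c : ℂ) (j : ℕ) : qP q c (j + 1) = (1 - c) * qP q (c * q) j := by
  simp only [qP, Finset.prod_range_succ', pow_zero, mul_one, pow_succ, mul_assoc, mul_comm]

lemma one_sub_mul_pow_ne_zero (hq : |q| ≤ 1) {c : ℂ} (hc : ‖c‖ < 1) (i : ℕ) :
    1 - c * (q : ℂ) ^ i ≠ 0 := by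
  have hlt : ‖c * (q : ℂ) ^ i‖ < 1 := by
    rw [norm_mul, norm_pow, Complex.norm_real, Real.norm_eq_abs]
    exact (mul_le_of_le_one_right (norm_nonneg c) (pow_le_one₀ (abs_nonneg q) hq)).trans_lt hc
  intro h
  rw [← sub_eq_zero.mp h, norm_one] at hlt
  exact lt_irrefl 1 hlt

end qPochhammer

section Coefficients

variable {q : ℝ} {α β γ : ℂ}

lemma phi21Coeff_zero : phi21Coeff q α β γ 0 = 1 := by
  simp [phi21Coeff, qP_zero]

lemma phi21Coeff_succ (j : ℕ) :
    phi21Coeff q α β γ (j + 1) = phi21Coeff q α β γ j *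
      ((1 - α * q ^ j) * (1 - β * q ^ j) / ((1 - q ^ (j + 1)) * (1 - γ * q ^ j))) := by
  simp only [phi21Coeff, qP_succ, ← pow_succ']
  rw [div_mul_div_comm]
  ring_nf

lemma one_sub_mul_phi21Coeff_succ (hγ : γ ≠ 1) (j : ℕ) :
    (1 - γ) * phi21Coeff q α β γ (j + 1) =
      (1 - α) * (1 - β) / (1 - q ^ (j + 1)) * phi21Coeff q (α * q) (β * q) (γ * q) j := by
  have hγ' : (1 - γ)⁻¹ * (1 - γ) = 1 := inv_mul_cancel₀ (sub_ne_zero.mpr hγ.symm)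
  rw [phi21Coeff, phi21Coeff, qP_succ' α, qP_succ' β, qP_succ' γ, qP_succ (q : ℂ), ← pow_succ']
  simp only [div_eq_mul_inv, mul_inv]
  linear_combination (1 - α) * qP q (α * q) j * ((1 - β) * qP q (β * q) j) *
    ((qP q q j)⁻¹ * (1 - q ^ (j + 1))⁻¹ * (qP q (γ * q) j)⁻¹) * hγ'

lemma phi21Coeff_contiguous (hq : |q| < 1) (hγ : ‖γ‖ < 1) (j : ℕ) :
    phi21Coeff q (α * q) (β * q) (γ * q) (j + 1) * (1 - γ * q ^ (j + 1)) -
        (1 - γ) * q ^ (j + 1) * phi21Coeff q α β γ (j + 1) =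
      phi21Coeff q (α * q) (β * q) (γ * q) j * (1 - α * β * q ^ (j + 1)) := by
  have hγ₁ : γ ≠ 1 := by rintro rfl; simp at hγ
  have hq₁ : 1 - (q : ℂ) ^ (j + 1) ≠ 0 := by
    simpa [pow_succ'] using one_sub_mul_pow_ne_zero hq.le
      (by rwa [Complex.norm_real, Real.norm_eq_abs] : ‖(q : ℂ)‖ < 1) j
  have hγq := one_sub_mul_pow_ne_zero hq.le hγ (j + 1)
  rw [mul_right_comm, one_sub_mul_phi21Coeff_succ hγ₁, phi21Coeff_succ]
  simp only [mul_assoc _ (q : ℂ), ← pow_succ']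
  field_simp
  ring

end Coefficients

lemma summable_phi21Coeff_mul_pow {q : ℝ} (hq : |q| < 1) (α β γ : ℂ) {z : ℂ} (hz : ‖z‖ < 1) :
    Summable fun j => phi21Coeff q α β γ j * z ^ j := by
  set ratio : ℕ → ℂ := fun j =>
    (1 - α * q ^ j) * (1 - β * q ^ j) / ((1 - q ^ (j + 1)) * (1 - γ * q ^ j)) * z
  have hstep (j : ℕ) : phi21Coeff q α β γ (j + 1) * z ^ (j + 1) =
      ratio j * (phi21Coeff q α β γ j * z ^ j) := by
    rw [phi21Coeff_succ, pow_succ]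
    ring
  have hpow : Tendsto (fun j : ℕ => (q : ℂ) ^ j) atTop (𝓝 0) :=
    tendsto_pow_atTop_nhds_zero_of_norm_lt_one (by rwa [Complex.norm_real, Real.norm_eq_abs])
  have hratio : Tendsto ratio atTop
      (𝓝 ((1 - α * 0) * (1 - β * 0) / ((1 - q * 0) * (1 - γ * 0)) * z)) := by
    simp only [ratio, pow_succ']
    exact (((tendsto_const_nhds.sub (hpow.const_mul α)).mul
      (tendsto_const_nhds.sub (hpow.const_mul β))).div
      ((tendsto_const_nhds.sub (hpow.const_mul (q : ℂ))).mul
        (tendsto_const_nhds.sub (hpow.const_mul γ))) (by simp)).mul_const z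
  simp only [mul_zero, sub_zero, mul_one, div_one, one_mul] at hratio
  obtain ⟨s, hzs, hs1⟩ := exists_between hz
  refine summable_of_ratio_norm_eventually_le hs1 ?_
  filter_upwards [hratio.norm.eventually_lt_const hzs] with j hj
  rw [hstep, norm_mul]
  exact mul_le_mul_of_nonneg_right hj.le (norm_nonneg _)

lemma hasSum_sub_succ {G : Type*} [AddCommGroup G] [TopologicalSpace G] [IsTopologicalAddGroup G]
    [T2Space G] {f : ℕ → G} (hf : Summable f) : HasSum (fun n => f n - f (n + 1)) (f 0) := by
  have h := hf.hasSum.sub ((summable_nat_add_iff 1).mpr hf).hasSum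
  rwa [hf.tsum_eq_zero_add, add_sub_cancel_right] at h

theorem phi21_contiguous {q : ℝ} (hq : |q| < 1) (α β : ℂ) {γ w : ℂ} (hγ : ‖γ‖ < 1)
    (hw : ‖w‖ < 1) :
    (1 - w) * phi21 q (α * q) (β * q) (γ * q) w -
        (γ - α * β * q * w) * phi21 q (α * q) (β * q) (γ * q) (q * w) =
      (1 - γ) * phi21 q α β γ (q * w) := by
  set d := phi21Coeff q (α * q) (β * q) (γ * q)
  set c := phi21Coeff q α β γ
  have hqw : ‖(q : ℂ) * w‖ < 1 := by
    rw [norm_mul, Complex.norm_real, Real.norm_eq_abs]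
    exact (mul_le_of_le_one_left (norm_nonneg w) hq.le).trans_lt hw
  have hd := summable_phi21Coeff_mul_pow hq (α * q) (β * q) (γ * q) hw
  have hd' := summable_phi21Coeff_mul_pow hq (α * q) (β * q) (γ * q) hqw
  have hc := summable_phi21Coeff_mul_pow hq α β γ hqw
  set f : ℕ → ℂ := fun j => (d j * (1 - γ * q ^ j) - (1 - γ) * q ^ j * c j) * w ^ j
  have hf : Summable f :=
    ((hd.sub (hd'.mul_left γ)).sub (hc.mul_left (1 - γ))).congr fun j => by
      simp only [f, mul_pow]; ring
  have hf0 : f 0 = 0 := by simp [f, d, c, phi21Coeff_zero]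
  have hterm (j : ℕ) : (1 - w) * (d j * w ^ j) - (γ - α * β * q * w) * (d j * (q * w) ^ j) -
      (1 - γ) * (c j * (q * w) ^ j) = f j - f (j + 1) := by
    simp only [f, d, c, phi21Coeff_contiguous hq hγ j]
    ring
  have hsum : HasSum (fun j => f j - f (j + 1))
      ((1 - w) * phi21 q (α * q) (β * q) (γ * q) w -
        (γ - α * β * q * w) * phi21 q (α * q) (β * q) (γ * q) (q * w) -
        (1 - γ) * phi21 q α β γ (q * w)) := by
    simp only [← hterm]
    exact ((hd.hasSum.mul_left (1 - w)).sub (hd'.hasSum.mul_left (γ - α * β * q * w))).sub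
      (hc.hasSum.mul_left (1 - γ))
  exact sub_eq_zero.mp (hsum.unique (hf0 ▸ hasSum_sub_succ hf))

theorem raising_littleqJacobi_general (q : ℝ) (hq0 : 0 < q) (hq1 : q < 1)
    (a b σ x : ℂ) (ha : a ≠ 0) (hσ : σ ≠ 0)
    (hab : ‖a * b‖ < 1)
    (h1 : ‖b * x / ((q : ℂ) * a)‖ < 1) :
    (1 + b * x / ((q : ℂ) * a)) * littleqJacobi q (a * (q : ℂ)) b σ x -
        a * b * (1 + x) * littleqJacobi q (a * (q : ℂ)) b σ ((q : ℂ) * x) =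
      (1 - a * b) * littleqJacobi q a b σ x := by
  have hq : |q| < 1 := abs_lt.mpr ⟨by linarith, hq1⟩
  have hqC : (q : ℂ) ≠ 0 := Complex.ofReal_ne_zero.mpr hq0.ne'
  set w := -(b * x / (a * q)) with hw_def
  have hw : ‖w‖ < 1 := by rwa [norm_neg, mul_comm a]
  have hqw : -(b * x / a) = q * w := by rw [hw_def]; field_simp
  have hqw' : -(b * (q * x) / (a * q)) = q * w := by rw [← hqw]; field_simp
  have hcoef₁ : 1 + b * x / (q * a) = 1 - w := by rw [hw_def, mul_comm (q : ℂ)]; ring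
  have hcoef₂ : a * b * (1 + x) = a * b - a * σ * (a / σ) * q * w := by
    rw [hw_def]; field_simp; ring
  simp only [littleqJacobi_eq_phi21, hqw, hqw', hcoef₁, hcoef₂, mul_right_comm a (q : ℂ),
    mul_div_right_comm a (q : ℂ)]
  exact phi21_contiguous hq (a * σ) (a / σ) hab hw

/-- Raising operator action on little q-Jacobi functions:
with `A(a,b)f(x) = (1 + bx/(qa)) f(x) - ab(1+x) f(qx)`, one has
`A(a,b) φ_λ(·;aq,b;q) = (1-ab) φ_λ(·;a,b;q)`. -/
theorem raising_littleqJacobi (q : ℝ) (hq0 : 0 < q) (hq1 : q < 1)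
    (a b σ x : ℂ) (ha : a ≠ 0) (hb : b ≠ 0) (hσ : σ ≠ 0)
    (hab : ‖a * b‖ < 1) (habq : ‖a * b * (q : ℂ)‖ < 1)
    (h1 : ‖b * x / ((q : ℂ) * a)‖ < 1) (h2 : ‖b * x / a‖ < 1) :
    (1 + b * x / ((q : ℂ) * a)) * littleqJacobi q (a * (q : ℂ)) b σ x -
        a * b * (1 + x) * littleqJacobi q (a * (q : ℂ)) b σ ((q : ℂ) * x) =
      (1 - a * b) * littleqJacobi q a b σ x :=
  raising_littleqJacobi_general q hq0 hq1 a b σ x ha hσ hab h1
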